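/- Suppose d_i = h_i for all i ∈ {1,…,n}. Then every solution T ∈ R^{n×n} for (d_1,…,d_n) is unimodular, and T·A is in Hermite form (in particular (T·A)_{ij} = 0 for all i > j); moreover any two solutions T, T′ for (d_1,…,d_n) differ by left multiplication by a diagonal matrix whose diagonal entries are units of R of degree 0, i.e. T′ = D·T for such a diagonal matrix D. -/

import Mathlib

/-!
Put `S = T * U⁻¹`, so that `S * H = T * A`. In `H` every diagonal entry has strictly larger
degree than the other entries of its column, and `T * A` has the same column degrees. Going
through row `i` of `S * H` from left to right, since `H` is upper triangular each entry
`(S * H) i k` involves only `S i k * H k k` and (for `k > i`) `S i i * H i k`; comparing degrees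
forces `S i k = 0` for `k ≠ i` and `degD (S i i) = 0`. So `S` is diagonal with unit entries,
`T = S * U` is unimodular, `T * A = S * H` is in Hermite form, and two solutions differ by a
diagonal matrix of units.
-/

open Matrix

namespace WithBot

lemma eq_bot_of_add_natCast_lt {x : WithBot ℕ} {m : ℕ} (h : x + m < m) : x = ⊥ := by
  induction x with
  | bot => rfl
  | coe a => rw [Nat.cast_withBot, ← WithBot.coe_add, WithBot.coe_lt_coe] at h; omega

lemma eq_zero_of_add_natCast_eq {x : WithBot ℕ} {m : ℕ} (h : x + m = m) : x = 0 := by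
  induction x with
  | bot => simp at h
  | coe a =>
    rw [Nat.cast_withBot, ← WithBot.coe_add, WithBot.coe_inj] at h
    rw [← WithBot.coe_zero, WithBot.coe_inj]; omega

lemma eq_zero_of_add_eq_zero {x y : WithBot ℕ} (h : x + y = 0) : x = 0 := by
  induction x with
  | bot => simp at h
  | coe a =>
    induction y with
    | bot => simp at h
    | coe b =>
      rw [← WithBot.coe_add, ← WithBot.coe_zero, WithBot.coe_inj] at h
      rw [← WithBot.coe_zero, WithBot.coe_inj]; omega

end WithBot

structure IsDegreeFunction {R : Type*} [Ring R] (degD : R → WithBot ℕ) : Prop where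
  eq_bot_iff : ∀ r, degD r = ⊥ ↔ r = 0
  map_mul : ∀ r s, degD (r * s) = degD r + degD s
  map_add_le : ∀ r s, degD (r + s) ≤ max (degD r) (degD s)

namespace IsDegreeFunction

variable {R : Type*} [Ring R] {degD : R → WithBot ℕ}

lemma map_one [Nontrivial R] (hD : IsDegreeFunction degD) : degD 1 = 0 := by
  have hne : degD (1 : R) ≠ ⊥ := fun h => one_ne_zero ((hD.eq_bot_iff 1).1 h)
  have hsq : degD (1 : R) + degD 1 = degD 1 := by rw [← hD.map_mul, one_mul]
  lift degD 1 to ℕ using hne with a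
  exact WithBot.eq_zero_of_add_natCast_eq hsq

lemma map_eq_zero_of_isUnit [Nontrivial R] (hD : IsDegreeFunction degD) {r : R} (hr : IsUnit r) :
    degD r = 0 := by
  obtain ⟨u, rfl⟩ := hr
  exact WithBot.eq_zero_of_add_eq_zero (y := degD ↑u⁻¹)
    (by rw [← hD.map_mul, u.mul_inv, hD.map_one])

lemma map_neg [Nontrivial R] (hD : IsDegreeFunction degD) (r : R) : degD (-r) = degD r := by
  rw [← neg_one_mul, hD.map_mul, hD.map_eq_zero_of_isUnit isUnit_one.neg, zero_add]

lemma map_sub_le [Nontrivial R] (hD : IsDegreeFunction degD) (r s : R) :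
    degD (r - s) ≤ max (degD r) (degD s) := by
  simpa only [sub_eq_add_neg, hD.map_neg] using hD.map_add_le r (-s)

lemma eq_zero_of_map_mul_lt (hD : IsDegreeFunction degD) {a b : R} {m : ℕ} (hb : degD b = m)
    (h : degD (a * b) < m) : a = 0 := by
  rw [hD.map_mul, hb] at h
  exact (hD.eq_bot_iff a).1 (WithBot.eq_bot_of_add_natCast_lt h)

lemma map_eq_zero_of_map_mul_eq (hD : IsDegreeFunction degD) {a b : R} {m : ℕ} (hb : degD b = m)
    (h : degD (a * b) = m) : degD a = 0 := by
  rw [hD.map_mul, hb] at h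
  exact WithBot.eq_zero_of_add_natCast_eq h

end IsDegreeFunction

section

variable {R : Type*} [Ring R] {n : ℕ}

/-- The degree constraints of the system (2) with target degrees `e`. -/
def HasDegreeProfile (degD : R → WithBot ℕ) (e : Fin n → ℕ) (C : Matrix (Fin n) (Fin n) R) :
    Prop :=
  (∀ i, degD (C i i) = e i) ∧ ∀ i j, i ≠ j → degD (C i j) < e j

namespace Matrix

variable {M B H : Matrix (Fin n) (Fin n) R}

lemma mul_apply_eq_sum_pair (hB : B.BlockTriangular id) {i k : Fin n}
    (hM : ∀ m < k, m ≠ i → M i m = 0) : (M * B) i k = ∑ m ∈ {i, k}, M i m * B m k := by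
  rw [mul_apply]
  refine (Finset.sum_subset (Finset.subset_univ _) fun m _ hm => ?_).symm
  simp only [Finset.mem_insert, Finset.mem_singleton, not_or] at hm
  rcases lt_or_gt_of_ne hm.2 with hmk | hkm
  · rw [hM m hmk hm.1, zero_mul]
  · rw [hB hkm, mul_zero]

variable {degD : R → WithBot ℕ} {e : Fin n → ℕ}

lemma degD_apply_self_eq_zero_of_mul (hD : IsDegreeFunction degD) (hB : B.BlockTriangular id)
    (hBe : HasDegreeProfile degD e B) (hMB : HasDegreeProfile degD e (M * B)) {i : Fin n}
    (hM : ∀ m < i, M i m = 0) : degD (M i i) = 0 := by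
  have hsum : (M * B) i i = M i i * B i i := by
    rw [mul_apply_eq_sum_pair hB fun m hm _ => hM m hm, Finset.pair_eq_singleton,
      Finset.sum_singleton]
  exact hD.map_eq_zero_of_map_mul_eq (hBe.1 i) (hsum ▸ hMB.1 i)

lemma apply_eq_zero_of_ne_of_mul [Nontrivial R] (hD : IsDegreeFunction degD)
    (hB : B.BlockTriangular id) (hBe : HasDegreeProfile degD e B)
    (hMB : HasDegreeProfile degD e (M * B)) {i k : Fin n} (hki : k ≠ i) : M i k = 0 := by
  induction k using WellFoundedLT.induction with
  | _ k hM =>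
    have hlead : degD (M i i * B i k) < e k := by
      rcases lt_or_gt_of_ne hki with hlt | hgt
      · rw [hB hlt, (hD.eq_bot_iff _).2 (mul_zero _)]
        exact WithBot.bot_lt_coe _
      · have hMii := degD_apply_self_eq_zero_of_mul hD hB hBe hMB fun m hm =>
          hM m (hm.trans hgt) hm.ne
        rw [hD.map_mul, hMii, zero_add]
        exact hBe.2 i k hki.symm
    have hsum : M i k * B k k = (M * B) i k - M i i * B i k := by
      rw [mul_apply_eq_sum_pair hB hM, Finset.sum_pair hki.symm, add_sub_cancel_left]
    refine hD.eq_zero_of_map_mul_lt (hBe.1 k) ?_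
    rw [hsum]
    exact (hD.map_sub_le _ _).trans_lt (max_lt (hMB.2 i k hki.symm) hlead)

lemma eq_diagonal_of_hasDegreeProfile_mul [Nontrivial R] (hD : IsDegreeFunction degD)
    (hB : B.BlockTriangular id) (hBe : HasDegreeProfile degD e B)
    (hMB : HasDegreeProfile degD e (M * B)) :
    M = diagonal (fun i => M i i) ∧ ∀ i, degD (M i i) = 0 := by
  refine ⟨?_, fun i => degD_apply_self_eq_zero_of_mul hD hB hBe hMB fun m hm =>
    apply_eq_zero_of_ne_of_mul hD hB hBe hMB hm.ne⟩
  ext i k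
  rcases eq_or_ne k i with rfl | hki
  · rw [diagonal_apply_eq]
  · rw [diagonal_apply_ne _ hki.symm, apply_eq_zero_of_ne_of_mul hD hB hBe hMB hki]

lemma isUnit_diagonal_units (u : Fin n → Rˣ) : IsUnit (diagonal fun i => (u i : R)) :=
  (Pi.isUnit_iff.2 fun i => (u i).isUnit).map (diagonalRingHom (Fin n) R)

lemma hasDegreeProfile_of_blockTriangular {degD : R → WithBot ℕ} {e : Fin n → ℕ}
    (hD : IsDegreeFunction degD) (hH : H.BlockTriangular id) (hdiag : ∀ i, degD (H i i) = e i)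
    (hdeg : ∀ i j, i < j → degD (H i j) < degD (H j j)) : HasDegreeProfile degD e H := by
  refine ⟨hdiag, fun i j hij => ?_⟩
  rcases lt_or_gt_of_ne hij with hlt | hgt
  · exact hdiag j ▸ hdeg i j hlt
  · rw [hH hgt, (hD.eq_bot_iff 0).2 rfl]
    exact WithBot.bot_lt_coe _

lemma exists_eq_diagonal_units_mul [Nontrivial R] {degD : R → WithBot ℕ} {e : Fin n → ℕ}
    {A U H T : Matrix (Fin n) (Fin n) R} (hD : IsDegreeFunction degD)
    (hunit : ∀ r : R, degD r = 0 → IsUnit r) (hU : IsUnit U) (hUA : U * A = H)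
    (hH : H.BlockTriangular id) (hHe : HasDegreeProfile degD e H)
    (hTA : HasDegreeProfile degD e (T * A)) :
    ∃ u : Fin n → Rˣ, T = diagonal (fun i => (u i : R)) * U := by
  obtain ⟨U, rfl⟩ := hU
  set M := T * (↑U⁻¹ : Matrix (Fin n) (Fin n) R)
  have hMH : M * H = T * A := by rw [← hUA, ← mul_assoc, mul_assoc T, U.inv_mul, mul_one]
  obtain ⟨hM, hMdeg⟩ := eq_diagonal_of_hasDegreeProfile_mul hD hH hHe (hMH ▸ hTA)
  refine ⟨fun i => (hunit _ (hMdeg i)).unit, ?_⟩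
  simp only [IsUnit.unit_spec]
  rw [← hM, mul_assoc, U.inv_mul, mul_one]

end Matrix

end

theorem stmt15_general
    {R : Type*} [Ring R] [Nontrivial R]
    (degD : R → WithBot ℕ)
    (hbot : ∀ r : R, degD r = ⊥ ↔ r = 0)
    (hmul : ∀ r s : R, degD (r * s) = degD r + degD s)
    (hadd : ∀ r s : R, degD (r + s) ≤ max (degD r) (degD s))
    (hunit : ∀ r : R, degD r = 0 → IsUnit r)
    {n : ℕ} (A U H : Matrix (Fin n) (Fin n) R)
    (hUuni : ∃ V : Matrix (Fin n) (Fin n) R, U * V = 1 ∧ V * U = 1)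
    (hHut : ∀ i j : Fin n, j < i → H i j = 0)
    (hHdeg : ∀ i j : Fin n, i < j → degD (H i j) < degD (H j j))
    (hUA : U * A = H)
    (h dvec : Fin n → ℕ)
    (hh : ∀ i : Fin n, degD (H i i) = ((h i : ℕ) : WithBot ℕ))
    (heq : ∀ i : Fin n, dvec i = h i) :
    (∀ T : Matrix (Fin n) (Fin n) R,
      ((∀ i : Fin n, (T * A) i i ≠ 0 ∧ degD ((T * A) i i) = ((dvec i : ℕ) : WithBot ℕ)) ∧
       (∀ i j : Fin n, i ≠ j → degD ((T * A) i j) < ((dvec j : ℕ) : WithBot ℕ))) →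
      ((∃ V : Matrix (Fin n) (Fin n) R, T * V = 1 ∧ V * T = 1) ∧
       (∀ i j : Fin n, j < i → (T * A) i j = 0) ∧
       (∀ i : Fin n, (T * A) i i ≠ 0) ∧
       (∀ i j : Fin n, i < j → degD ((T * A) i j) < degD ((T * A) j j)))) ∧
    (∀ T T' : Matrix (Fin n) (Fin n) R,
      ((∀ i : Fin n, (T * A) i i ≠ 0 ∧ degD ((T * A) i i) = ((dvec i : ℕ) : WithBot ℕ)) ∧
       (∀ i j : Fin n, i ≠ j → degD ((T * A) i j) < ((dvec j : ℕ) : WithBot ℕ))) →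
      ((∀ i : Fin n, (T' * A) i i ≠ 0 ∧ degD ((T' * A) i i) = ((dvec i : ℕ) : WithBot ℕ)) ∧
       (∀ i j : Fin n, i ≠ j → degD ((T' * A) i j) < ((dvec j : ℕ) : WithBot ℕ))) →
      ∃ D : Matrix (Fin n) (Fin n) R,
        (∀ i j : Fin n, i ≠ j → D i j = 0) ∧
        (∀ i : Fin n, IsUnit (D i i) ∧ degD (D i i) = 0) ∧
        T' = D * T) := by
  have hD : IsDegreeFunction degD := ⟨hbot, hmul, hadd⟩
  have hU : IsUnit U := isUnit_iff_exists.2 hUuni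
  have hHe : HasDegreeProfile degD h H :=
    hasDegreeProfile_of_blockTriangular hD (fun i j => hHut i j) hh hHdeg
  obtain rfl : dvec = h := funext heq
  have hscale (T : Matrix (Fin n) (Fin n) R) (hT : HasDegreeProfile degD dvec (T * A)) :=
    exists_eq_diagonal_units_mul hD hunit hU hUA (fun i j => hHut i j) hHe hT
  refine ⟨fun T hT => ?_, fun T T' hT hT' => ?_⟩
  · obtain ⟨u, rfl⟩ := hscale T ⟨fun i => (hT.1 i).2, hT.2⟩
    refine ⟨isUnit_iff_exists.1 ((isUnit_diagonal_units u).mul hU), fun i j hji => ?_,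
      fun i => (hT.1 i).1, fun i j hij => (hT.1 j).2 ▸ hT.2 i j hij.ne⟩
    rw [mul_assoc, hUA, diagonal_mul, hHut i j hji, mul_zero]
  · obtain ⟨u, rfl⟩ := hscale T ⟨fun i => (hT.1 i).2, hT.2⟩
    obtain ⟨u', rfl⟩ := hscale T' ⟨fun i => (hT'.1 i).2, hT'.2⟩
    refine ⟨diagonal fun i => ↑(u' i * (u i)⁻¹), fun i j hij => diagonal_apply_ne _ hij,
      fun i => ?_, ?_⟩
    · rw [diagonal_apply_eq]
      exact ⟨Units.isUnit _, hD.map_eq_zero_of_isUnit (Units.isUnit _)⟩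
    · rw [← mul_assoc, diagonal_mul_diagonal]
      simp only [Units.val_mul, Units.inv_mul_cancel_right]

/-- (Uniqueness part of the degree-constraint system.)
With `A ∈ R^{n×n}` of full left row rank, `degD A_{ij} ≤ d`, Hermite form
`H = U·A` with diagonal degrees `h_i = degD H_{ii}`: if `d_i = h_i` for all
`i`, then every solution `T` of the system (2) is unimodular and `T·A` is in
Hermite form (in particular lower entries vanish); moreover any two
solutions differ by left multiplication by a diagonal matrix whose diagonal
entries are units of degree `0`. -/
theorem stmt15
    {R : Type*} [Ring R] [Nontrivial R] [NoZeroDivisors R]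
    (degD : R → WithBot ℕ)
    (hbot : ∀ r : R, degD r = ⊥ ↔ r = 0)
    (hmul : ∀ r s : R, degD (r * s) = degD r + degD s)
    (hadd : ∀ r s : R, degD (r + s) ≤ max (degD r) (degD s))
    (hunit : ∀ r : R, degD r = 0 → IsUnit r)
    (hdivision : ∀ f g : R, g ≠ 0 → ∃ q rem : R, f = q * g + rem ∧ degD rem < degD g)
    {n : ℕ} (d : ℕ) (A U H : Matrix (Fin n) (Fin n) R)
    (hrank : ∀ b : Fin n → R, Matrix.vecMul b A = 0 → b = 0)
    (hAd : ∀ i j : Fin n, degD (A i j) ≤ ((d : ℕ) : WithBot ℕ))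
    (hUuni : ∃ V : Matrix (Fin n) (Fin n) R, U * V = 1 ∧ V * U = 1)
    (hHut : ∀ i j : Fin n, j < i → H i j = 0)
    (hHdiag : ∀ i : Fin n, H i i ≠ 0)
    (hHdeg : ∀ i j : Fin n, i < j → degD (H i j) < degD (H j j))
    (hUA : U * A = H)
    (h dvec : Fin n → ℕ)
    (hh : ∀ i : Fin n, degD (H i i) = ((h i : ℕ) : WithBot ℕ))
    (heq : ∀ i : Fin n, dvec i = h i) :
    (∀ T : Matrix (Fin n) (Fin n) R,
      ((∀ i : Fin n, (T * A) i i ≠ 0 ∧ degD ((T * A) i i) = ((dvec i : ℕ) : WithBot ℕ)) ∧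
       (∀ i j : Fin n, i ≠ j → degD ((T * A) i j) < ((dvec j : ℕ) : WithBot ℕ))) →
      ((∃ V : Matrix (Fin n) (Fin n) R, T * V = 1 ∧ V * T = 1) ∧
       (∀ i j : Fin n, j < i → (T * A) i j = 0) ∧
       (∀ i : Fin n, (T * A) i i ≠ 0) ∧
       (∀ i j : Fin n, i < j → degD ((T * A) i j) < degD ((T * A) j j)))) ∧
    (∀ T T' : Matrix (Fin n) (Fin n) R,
      ((∀ i : Fin n, (T * A) i i ≠ 0 ∧ degD ((T * A) i i) = ((dvec i : ℕ) : WithBot ℕ)) ∧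
       (∀ i j : Fin n, i ≠ j → degD ((T * A) i j) < ((dvec j : ℕ) : WithBot ℕ))) →
      ((∀ i : Fin n, (T' * A) i i ≠ 0 ∧ degD ((T' * A) i i) = ((dvec i : ℕ) : WithBot ℕ)) ∧
       (∀ i j : Fin n, i ≠ j → degD ((T' * A) i j) < ((dvec j : ℕ) : WithBot ℕ))) →
      ∃ D : Matrix (Fin n) (Fin n) R,
        (∀ i j : Fin n, i ≠ j → D i j = 0) ∧
        (∀ i : Fin n, IsUnit (D i i) ∧ degD (D i i) = 0) ∧
        T' = D * T) :=
  stmt15_general degD hbot hmul hadd hunit A U H hUuni hHut hHdeg hUA h dvec hh heq
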